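/- Let C be a triangulated category with a weight structure w. Suppose M ∈ C_{w≤0} admits a weight filtration M_{≤-2} → M →π M_{≥0} → M_{≤-2}[1] avoiding weight -1 (i.e., M_{≤-2} ∈ C_{w≤-2} and M_{≥0} ∈ C_{w≥0}). Then: (i) M_{≥0} belongs to the heart C_{w=0}; (ii) for every object N of the heart C_{w=0}, precomposition with π induces a bijection Hom_C(M_{≥0}, N) → Hom_C(M, N). (Thus M ↦ M_{≥0} =: Gr_0 M is left adjoint to the inclusion of the heart into the full subcategory of objects of non-positive weights without weight -1.) -/

import Mathlib

open CategoryTheory CategoryTheory.Limits CategoryTheory.Pretriangulated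

universe v u

/-- The shift `S[n]` of a class of objects `S`: the objects isomorphic to `A⟦n⟧`
for some `A ∈ S`. -/
def shiftedSet {C : Type u} [Category.{v} C] [HasShift C ℤ] (S : Set C) (n : ℤ) : Set C :=
  {X | ∃ A ∈ S, Nonempty (X ≅ A⟦n⟧)}

/-- A weight structure on a pretriangulated category `C`, following Bondarko. -/
structure WeightStructure (C : Type u) [Category.{v} C] [Preadditive C] [HasZeroObject C]
    [HasShift C ℤ] [∀ n : ℤ, (shiftFunctor C n).Additive] [Pretriangulated C] where
  /-- the objects of weights `≤ 0` -/
  le : Set C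
  /-- the objects of weights `≥ 0` -/
  ge : Set C
  /-- `C_{w ≤ 0}` is closed under retracts -/
  retract_le : ∀ (X M : C) (i : X ⟶ M) (r : M ⟶ X), i ≫ r = 𝟙 X → M ∈ le → X ∈ le
  /-- `C_{w ≥ 0}` is closed under retracts -/
  retract_ge : ∀ (X M : C) (i : X ⟶ M) (r : M ⟶ X), i ≫ r = 𝟙 X → M ∈ ge → X ∈ ge
  /-- `C_{w ≤ 0} ⊆ C_{w ≤ 1}` -/
  le_shift : le ⊆ shiftedSet le 1
  /-- `C_{w ≥ 1} ⊆ C_{w ≥ 0}` -/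
  ge_shift : shiftedSet ge 1 ⊆ ge
  /-- orthogonality -/
  orth : ∀ (M N : C), M ∈ le → N ∈ shiftedSet ge 1 → ∀ f : M ⟶ N, f = 0
  /-- existence of weight filtrations -/
  exists_wf : ∀ M : C, ∃ (A B : C) (a : A ⟶ M) (b : M ⟶ B) (δ : B ⟶ A⟦(1:ℤ)⟧),
    Triangle.mk a b δ ∈ (distTriang C) ∧ A ∈ le ∧ B ∈ shiftedSet ge 1

namespace WeightStructure

variable {C : Type u} [Category.{v} C] [Preadditive C] [HasZeroObject C]
  [HasShift C ℤ] [∀ n : ℤ, (shiftFunctor C n).Additive] [Pretriangulated C]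

/-- `C_{w ≤ n} := C_{w ≤ 0}[n]`. -/
def wLE (w : WeightStructure C) (n : ℤ) : Set C := shiftedSet w.le n

/-- `C_{w ≥ n} := C_{w ≥ 0}[n]`. -/
def wGE (w : WeightStructure C) (n : ℤ) : Set C := shiftedSet w.ge n

/-- The heart `C_{w = 0} := C_{w ≤ 0} ∩ C_{w ≥ 0}`. -/
def heart (w : WeightStructure C) : Set C := w.le ∩ w.ge

/-- An object `M` is without weights `m, …, n` if it admits a weight filtration
avoiding these weights. -/
def WithoutWeights (w : WeightStructure C) (m n : ℤ) (M : C) : Prop :=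
  ∃ (A B : C) (a : A ⟶ M) (b : M ⟶ B) (δ : B ⟶ A⟦(1:ℤ)⟧),
    Triangle.mk a b δ ∈ (distTriang C) ∧ A ∈ w.wLE (m - 1) ∧ B ∈ w.wGE (n + 1)

end WeightStructure

/-! Rotating the triangle exhibits `G` as an extension of `A⟦1⟧ ∈ C_{w ≤ -1}` by
`M ∈ C_{w ≤ 0}`, so `G ∈ C_{w ≤ 0}` and hence `G` lies in the heart. For `N` in the heart,
`Hom(A, N)` and `Hom(A⟦1⟧, N)` vanish by orthogonality, as both `A` and `A⟦1⟧` have weights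
`≤ -1` while `N` has weights `≥ 0`; the exact sequence
`Hom(A⟦1⟧, N) → Hom(G, N) → Hom(M, N) → Hom(A, N)` then makes `g ↦ π ≫ g` bijective. -/

section ShiftedSet

variable {C : Type u} [Category.{v} C] [HasShift C ℤ] {S : Set C}

lemma mem_shiftedSet_of_iso {X Y : C} {n : ℤ} (e : X ≅ Y) (hY : Y ∈ shiftedSet S n) :
    X ∈ shiftedSet S n :=
  let ⟨A, hA, ⟨e'⟩⟩ := hY
  ⟨A, hA, ⟨e ≪≫ e'⟩⟩

lemma shift_mem_shiftedSet {X : C} {n k p : ℤ} (hX : X ∈ shiftedSet S n) (h : n + k = p) :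
    X⟦k⟧ ∈ shiftedSet S p :=
  let ⟨A, hA, ⟨e⟩⟩ := hX
  ⟨A, hA, ⟨(shiftFunctor C k).mapIso e ≪≫ ((shiftFunctorAdd' C n k p h).app A).symm⟩⟩

lemma mem_shiftedSet_zero {X : C} (hX : X ∈ S) : X ∈ shiftedSet S 0 :=
  ⟨X, hX, ⟨((shiftFunctorZero C ℤ).app X).symm⟩⟩

end ShiftedSet

lemma CategoryTheory.Pretriangulated.bijective_mor₂_comp_of_distTriang {C : Type u}
    [Category.{v} C] [Preadditive C] [HasZeroObject C] [HasShift C ℤ]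
    [∀ n : ℤ, (shiftFunctor C n).Additive] [Pretriangulated C]
    {T : Triangle C} (hT : T ∈ distTriang C) {N : C}
    (h₁ : ∀ f : T.obj₁ ⟶ N, f = 0) (h₁' : ∀ f : T.obj₁⟦(1:ℤ)⟧ ⟶ N, f = 0) :
    Function.Bijective (fun g : T.obj₃ ⟶ N => T.mor₂ ≫ g) := by
  refine ⟨(injective_iff_map_eq_zero (Preadditive.leftComp N T.mor₂)).2 fun g hg => ?_,
    fun f => ?_⟩
  · obtain ⟨h, rfl⟩ := Triangle.yoneda_exact₃ T hT g hg
    rw [h₁' h, comp_zero]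
  · obtain ⟨g, hg⟩ := Triangle.yoneda_exact₂ T hT f (h₁ _)
    exact ⟨g, hg.symm⟩

namespace WeightStructure

variable {C : Type u} [Category.{v} C] [Preadditive C] [HasZeroObject C]
  [HasShift C ℤ] [∀ n : ℤ, (shiftFunctor C n).Additive] [Pretriangulated C]
  (w : WeightStructure C)

lemma mem_le_of_iso {X Y : C} (e : X ≅ Y) (hY : Y ∈ w.le) : X ∈ w.le :=
  w.retract_le X Y e.hom e.inv e.hom_inv_id hY

lemma mem_le_of_mem_wLE_zero {X : C} (hX : X ∈ w.wLE 0) : X ∈ w.le :=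
  let ⟨A, hA, ⟨e⟩⟩ := hX
  w.mem_le_of_iso (e ≪≫ (shiftFunctorZero C ℤ).app A) hA

lemma wLE_subset_wLE_add_one (n : ℤ) : w.wLE n ⊆ w.wLE (n + 1) := fun _ ⟨_, hA, ⟨e⟩⟩ =>
  mem_shiftedSet_of_iso e (shift_mem_shiftedSet (w.le_shift hA) (add_comm 1 n))

lemma wGE_add_one_subset_wGE (n : ℤ) : w.wGE (n + 1) ⊆ w.wGE n := fun _ ⟨B, hB, ⟨e⟩⟩ =>
  ⟨B⟦(1:ℤ)⟧, w.ge_shift ⟨B, hB, ⟨Iso.refl _⟩⟩,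
    ⟨e ≪≫ (shiftFunctorAdd' C 1 n (n + 1) (add_comm 1 n)).app B⟩⟩

lemma wLE_mono {m n : ℤ} (h : m ≤ n) : w.wLE m ⊆ w.wLE n := by
  induction n, h using Int.leInduction with
  | base => rfl
  | succ n _ ih => exact ih.trans (w.wLE_subset_wLE_add_one n)

lemma wGE_anti {m n : ℤ} (h : m ≤ n) : w.wGE n ⊆ w.wGE m := by
  induction n, h using Int.leInduction with
  | base => rfl
  | succ n _ ih => exact (w.wGE_add_one_subset_wGE n).trans ih

lemma hom_eq_zero_of_mem_wLE_of_mem_wGE_add_one {X Y : C} {n : ℤ} (hX : X ∈ w.wLE n)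
    (hY : Y ∈ w.wGE (n + 1)) (f : X ⟶ Y) : f = 0 :=
  (shiftFunctor C (-n)).map_injective <| by
    rw [Functor.map_zero]
    exact w.orth _ _ (w.mem_le_of_mem_wLE_zero (shift_mem_shiftedSet hX (add_neg_cancel n)))
      (shift_mem_shiftedSet hY (by ring)) _

lemma hom_eq_zero_of_mem_wLE_of_mem_wGE {X Y : C} {m n : ℤ} (hX : X ∈ w.wLE m)
    (hY : Y ∈ w.wGE n) (h : m < n) (f : X ⟶ Y) : f = 0 :=
  w.hom_eq_zero_of_mem_wLE_of_mem_wGE_add_one hX (w.wGE_anti h hY) f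

/-- Orthogonality kills the map `T.obj₂ ⟶ B` of a weight filtration `A ⟶ T.obj₂ ⟶ B`,
so `T.obj₂` is a retract of `A ∈ C_{w ≤ 0}`. -/
lemma mem_le_of_distTriang {T : Triangle C} (hT : T ∈ distTriang C)
    (h₁ : T.obj₁ ∈ w.le) (h₃ : T.obj₃ ∈ w.le) : T.obj₂ ∈ w.le := by
  obtain ⟨A, B, a, b, δ, hAB, hA, hB⟩ := w.exists_wf T.obj₂
  obtain ⟨c, hc⟩ := Triangle.yoneda_exact₂ T hT b (w.orth _ _ h₁ hB _)
  have hb : b = 0 := by rw [hc, w.orth _ _ h₃ hB c, comp_zero]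
  obtain ⟨s, hs⟩ := Triangle.coyoneda_exact₂ _ hAB (𝟙 T.obj₂)
    (by change 𝟙 T.obj₂ ≫ b = 0; rw [hb, comp_zero])
  exact w.retract_le _ _ s a hs.symm hA

end WeightStructure

/-- For `M` of weights `≤ 0` admitting a weight filtration avoiding weight `-1`, the
weight-zero quotient `Gr₀ M := M_{≥ 0}` lies in the heart and is universal among morphisms
from `M` to objects of the heart. -/
theorem gr0_left_adjoint
    {C : Type u} [Category.{v} C] [Preadditive C] [HasZeroObject C]
    [HasShift C ℤ] [∀ n : ℤ, (shiftFunctor C n).Additive] [Pretriangulated C]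
    (w : WeightStructure C) (M : C) (hM : M ∈ w.le)
    (A G : C) (a : A ⟶ M) (π : M ⟶ G) (δ : G ⟶ A⟦(1:ℤ)⟧)
    (hT : Triangle.mk a π δ ∈ distTriang C)
    (hA : A ∈ w.wLE (-2)) (hG : G ∈ w.ge) :
    G ∈ w.heart ∧
      ∀ N : C, N ∈ w.heart → Function.Bijective (fun g : G ⟶ N => π ≫ g) := by
  have hA₁ : A⟦(1:ℤ)⟧ ∈ w.wLE (-1) := shift_mem_shiftedSet hA (by norm_num)
  have hGle : G ∈ w.le :=
    w.mem_le_of_distTriang (rot_of_distTriang _ hT) hM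
      (w.mem_le_of_mem_wLE_zero (w.wLE_mono (by norm_num) hA₁))
  refine ⟨⟨hGle, hG⟩, fun N hN => bijective_mor₂_comp_of_distTriang hT ?_ ?_⟩
  · exact w.hom_eq_zero_of_mem_wLE_of_mem_wGE hA (mem_shiftedSet_zero hN.2) (by norm_num)
  · exact w.hom_eq_zero_of_mem_wLE_of_mem_wGE hA₁ (mem_shiftedSet_zero hN.2) (by norm_num)
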